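/- Let b ∈ ℝ^J, c ∈ ℝ^K be unit vectors satisfying the coupled eigen-equations: there exists λ ∈ ℝ with Σ_{β,γ,δ} 𝓜_{αβγδ} c_β b_γ c_δ = λ·b_α for all α and Σ_{α,γ,δ} 𝓜_{αβγδ} b_α b_γ c_δ = λ·c_β for all β. Then, setting a := T•₂,₃(b,c) ∈ ℝ^I, one has λ = ‖a‖², and the triple (a,b,c) satisfies the first-order optimality conditions of the rank-one least-squares problem min (1/2)·Σ_{i,j,k}(T_{ijk} − a_i b_j c_k)²; explicitly, T•₂,₃(b,c) = a, T•₁,₃(a,c) = ‖a‖²·b, and T•₁,₂(a,b) = ‖a‖²·c, so all partial derivatives of the rank-one least-squares functional vanish at (a,b,c). -/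

import Mathlib

open Finset

/-- The rank-one least-squares functional. -/
noncomputable def J1 {I J K : ℕ} (T : Fin I → Fin J → Fin K → ℝ)
    (a : Fin I → ℝ) (b : Fin J → ℝ) (c : Fin K → ℝ) : ℝ :=
  (1 / 2) * ∑ i, ∑ j, ∑ k, (T i j k - a i * b j * c k) ^ 2

/-- Squared Euclidean norm. -/
noncomputable def nsq {n : ℕ} (x : Fin n → ℝ) : ℝ := ∑ i, (x i) ^ 2

/-- The fourth-order tensor `𝓜_{αβγδ} = ∑ᵢ T_{iαβ} T_{iγδ}`. -/
noncomputable def M4 {I J K : ℕ} (T : Fin I → Fin J → Fin K → ℝ)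
    (α γ : Fin J) (β δ : Fin K) : ℝ :=
  ∑ i, T i α β * T i γ δ

/-- `(T •₂,₃ (b,c))ᵢ = ∑_{j,k} T_{ijk} bⱼ cₖ`. -/
noncomputable def T23 {I J K : ℕ} (T : Fin I → Fin J → Fin K → ℝ)
    (b : Fin J → ℝ) (c : Fin K → ℝ) : Fin I → ℝ :=
  fun i => ∑ j, ∑ k, T i j k * b j * c k

/-- `(T •₁,₃ (a,c))ⱼ = ∑_{i,k} T_{ijk} aᵢ cₖ`. -/
noncomputable def T13 {I J K : ℕ} (T : Fin I → Fin J → Fin K → ℝ)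
    (a : Fin I → ℝ) (c : Fin K → ℝ) : Fin J → ℝ :=
  fun j => ∑ i, ∑ k, T i j k * a i * c k

/-- `(T •₁,₂ (a,b))ₖ = ∑_{i,j} T_{ijk} aᵢ bⱼ`. -/
noncomputable def T12 {I J K : ℕ} (T : Fin I → Fin J → Fin K → ℝ)
    (a : Fin I → ℝ) (b : Fin J → ℝ) : Fin K → ℝ :=
  fun k => ∑ i, ∑ j, T i j k * a i * b j


lemma move3 {A B C : Type*} [Fintype A] [Fintype B] [Fintype C] (f : A → B → C → ℝ) :
    ∑ a, ∑ b, ∑ c, f a b c = ∑ c, ∑ a, ∑ b, f a b c := by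
  rw [show (∑ a, ∑ b, ∑ c, f a b c) = ∑ a, ∑ c, ∑ b, f a b c from
    Finset.sum_congr rfl fun a _ => Finset.sum_comm, Finset.sum_comm]

lemma move4 {A B C D : Type*} [Fintype A] [Fintype B] [Fintype C] [Fintype D]
    (f : A → B → C → D → ℝ) :
    ∑ a, ∑ b, ∑ c, ∑ d, f a b c d = ∑ d, ∑ a, ∑ b, ∑ c, f a b c d := by
  rw [show (∑ a, ∑ b, ∑ c, ∑ d, f a b c d) = ∑ a, ∑ d, ∑ b, ∑ c, f a b c d from
    Finset.sum_congr rfl fun a _ => move3 _, Finset.sum_comm]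

lemma pull_const2 {m n : ℕ} (f : Fin m → Fin n → ℝ) (r : ℝ) :
    ∑ p, ∑ q, r * f p q = r * ∑ p, ∑ q, f p q := by
  simp [Finset.mul_sum]

lemma key2 {m n : ℕ} (f : Fin m → Fin n → ℝ) (u : Fin m → ℝ) (v : Fin n → ℝ) (x : ℝ) :
    ∑ p, ∑ q, (2:ℝ) * (f p q - x * u p * v q) * (-(u p * v q)) =
      2 * x * ((∑ p, u p ^ 2) * (∑ q, v q ^ 2)) - 2 * ∑ p, ∑ q, f p q * u p * v q := by
  have h : ∀ p q, (2:ℝ) * (f p q - x * u p * v q) * (-(u p * v q)) =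
      2 * x * (u p ^ 2 * v q ^ 2) - 2 * (f p q * u p * v q) := fun p q => by ring
  simp only [h, Finset.sum_sub_distrib, ← Finset.mul_sum, ← Finset.sum_mul]

/-- If unit vectors `b, c` satisfy the coupled eigen-equations for some `λ`, then with
`a := T•₂,₃(b,c)` one has `λ = ‖a‖²`, `T•₁,₃(a,c) = ‖a‖²·b`, `T•₁,₂(a,b) = ‖a‖²·c`, and
all partial derivatives of the rank-one least-squares functional vanish at `(a,b,c)`. -/
theorem stmt9 (I J K : ℕ) (hI : 0 < I) (hJ : 0 < J) (hK : 0 < K)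
    (T : Fin I → Fin J → Fin K → ℝ)
    (b : Fin J → ℝ) (c : Fin K → ℝ) (lam : ℝ)
    (hb : nsq b = 1) (hc : nsq c = 1)
    (heig1 : ∀ α : Fin J, (∑ β, ∑ γ, ∑ δ, M4 T α γ β δ * c β * b γ * c δ) = lam * b α)
    (heig2 : ∀ β : Fin K, (∑ α, ∑ γ, ∑ δ, M4 T α γ β δ * b α * b γ * c δ) = lam * c β) :
    lam = nsq (T23 T b c) ∧
    (∀ j, T13 T (T23 T b c) c j = nsq (T23 T b c) * b j) ∧
    (∀ k, T12 T (T23 T b c) b k = nsq (T23 T b c) * c k) ∧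
    (∀ i, HasDerivAt (fun t => J1 T (Function.update (T23 T b c) i t) b c) 0 (T23 T b c i)) ∧
    (∀ j, HasDerivAt (fun t => J1 T (T23 T b c) (Function.update b j t) c) 0 (b j)) ∧
    (∀ k, HasDerivAt (fun t => J1 T (T23 T b c) b (Function.update c k t)) 0 (c k)) := by
  have L1 : ∀ α, T13 T (T23 T b c) c α = lam * b α := by
    intro α
    rw [← heig1 α]
    have h1 : ∀ β γ δ, M4 T α γ β δ * c β * b γ * c δ =
        ∑ i, T i α β * T i γ δ * c β * b γ * c δ := by
      intro β γ δ
      rw [M4, Finset.sum_mul, Finset.sum_mul, Finset.sum_mul]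
    simp only [h1]
    rw [move4]
    show (∑ i, ∑ β, T i α β * T23 T b c i * c β) = _
    refine Finset.sum_congr rfl fun i _ => Finset.sum_congr rfl fun β _ => ?_
    have h2 : ∀ γ δ, T i α β * T i γ δ * c β * b γ * c δ =
        (T i α β * c β) * (T i γ δ * b γ * c δ) := fun γ δ => by ring
    rw [show (∑ γ, ∑ δ, T i α β * T i γ δ * c β * b γ * c δ) =
        (T i α β * c β) * ∑ γ, ∑ δ, T i γ δ * b γ * c δ from by
      simp only [h2]; exact pull_const2 _ _]
    show T i α β * T23 T b c i * c β = (T i α β * c β) * T23 T b c i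
    ring
  have L2 : ∀ β, T12 T (T23 T b c) b β = lam * c β := by
    intro β
    rw [← heig2 β]
    have h1 : ∀ α γ δ, M4 T α γ β δ * b α * b γ * c δ =
        ∑ i, T i α β * T i γ δ * b α * b γ * c δ := by
      intro α γ δ
      rw [M4, Finset.sum_mul, Finset.sum_mul, Finset.sum_mul]
    simp only [h1]
    rw [move4]
    show (∑ i, ∑ α, T i α β * T23 T b c i * b α) = _
    refine Finset.sum_congr rfl fun i _ => Finset.sum_congr rfl fun α _ => ?_
    have h2 : ∀ γ δ, T i α β * T i γ δ * b α * b γ * c δ =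
        (T i α β * b α) * (T i γ δ * b γ * c δ) := fun γ δ => by ring
    rw [show (∑ γ, ∑ δ, T i α β * T i γ δ * b α * b γ * c δ) =
        (T i α β * b α) * ∑ γ, ∑ δ, T i γ δ * b γ * c δ from by
      simp only [h2]; exact pull_const2 _ _]
    show T i α β * T23 T b c i * b α = (T i α β * b α) * T23 T b c i
    ring
  have hb' : (∑ j, b j ^ 2) = 1 := hb
  have hc' : (∑ k, c k ^ 2) = 1 := hc
  have hlam : lam = nsq (T23 T b c) := by
    have e1 : ∑ j, b j * T13 T (T23 T b c) c j = lam := by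
      simp only [L1]
      have h : ∀ j : Fin J, b j * (lam * b j) = lam * b j ^ 2 := fun j => by ring
      simp only [h, ← Finset.mul_sum, hb', mul_one]
    have e2 : ∑ j, b j * T13 T (T23 T b c) c j = nsq (T23 T b c) := by
      show (∑ j, b j * ∑ i, ∑ k, T i j k * T23 T b c i * c k) = ∑ i, T23 T b c i ^ 2
      have h1 : ∀ j, b j * (∑ i, ∑ k, T i j k * T23 T b c i * c k) =
          ∑ i, ∑ k, T23 T b c i * (T i j k * b j * c k) := by
        intro j
        rw [← pull_const2]
        exact Finset.sum_congr rfl fun i _ => Finset.sum_congr rfl fun k _ => by ring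
      simp only [h1]
      rw [Finset.sum_comm]
      refine Finset.sum_congr rfl fun i _ => ?_
      rw [show (∑ j, ∑ k, T23 T b c i * (T i j k * b j * c k)) =
        T23 T b c i * ∑ j, ∑ k, T i j k * b j * c k from pull_const2 _ _]
      show T23 T b c i * T23 T b c i = T23 T b c i ^ 2
      ring
    rw [← e1, e2]
  have hT13 : ∀ j, T13 T (T23 T b c) c j = nsq (T23 T b c) * b j := by
    intro j; rw [L1 j, hlam]
  have hT12 : ∀ k, T12 T (T23 T b c) b k = nsq (T23 T b c) * c k := by
    intro k; rw [L2 k, hlam]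
  refine ⟨hlam, hT13, hT12, ?_, ?_, ?_⟩
  · -- derivative in a
    intro i
    have h1 : HasDerivAt
        (fun t => ∑ i', ∑ j, ∑ k,
          (T i' j k - Function.update (T23 T b c) i t i' * b j * c k) ^ 2)
        (∑ i', if i' = i then
            ∑ j, ∑ k, (2:ℝ) * (T i j k - T23 T b c i * b j * c k) * (-(b j * c k)) else 0)
        (T23 T b c i) := by
      apply HasDerivAt.fun_sum
      intro i' _
      by_cases h : i' = i
      · subst h
        simp only [if_pos rfl, Function.update_self]
        apply HasDerivAt.fun_sum
        intro j _
        apply HasDerivAt.fun_sum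
        intro k _
        have hd := ((hasDerivAt_const (T23 T b c i') (T i' j k)).fun_sub
          (((hasDerivAt_id (T23 T b c i')).mul_const (b j)).mul_const (c k))).fun_pow 2
        refine hd.congr_deriv ?_
        push_cast
        simp only [id_eq]
        ring
      · simp only [if_neg h, Function.update_of_ne h]
        exact hasDerivAt_const _ _
    have h2 := h1.const_mul (1/2 : ℝ)
    have h0 : (1/2 : ℝ) * (∑ i', if i' = i then
        ∑ j, ∑ k, (2:ℝ) * (T i j k - T23 T b c i * b j * c k) * (-(b j * c k)) else 0) = 0 := by
      simp only [Finset.sum_ite_eq', Finset.mem_univ, if_true]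
      rw [key2 (fun j k => T i j k) b c, hb', hc',
        show (∑ j, ∑ k, T i j k * b j * c k) = T23 T b c i from rfl]
      ring
    rw [h0] at h2
    exact h2
  · -- derivative in b
    intro j
    have h1 : HasDerivAt
        (fun t => ∑ i, ∑ j', ∑ k,
          (T i j' k - T23 T b c i * Function.update b j t j' * c k) ^ 2)
        (∑ i, ∑ j', if j' = j then
            ∑ k, (2:ℝ) * (T i j k - b j * T23 T b c i * c k) * (-(T23 T b c i * c k)) else 0)
        (b j) := by
      apply HasDerivAt.fun_sum
      intro i _
      apply HasDerivAt.fun_sum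
      intro j' _
      by_cases h : j' = j
      · subst h
        simp only [if_pos rfl, Function.update_self]
        apply HasDerivAt.fun_sum
        intro k _
        have hd := ((hasDerivAt_const (b j') (T i j' k)).fun_sub
          (((hasDerivAt_id (b j')).const_mul (T23 T b c i)).mul_const (c k))).fun_pow 2
        refine hd.congr_deriv ?_
        push_cast
        simp only [id_eq]
        ring
      · simp only [if_neg h, Function.update_of_ne h]
        exact hasDerivAt_const _ _
    have h2 := h1.const_mul (1/2 : ℝ)
    have h0 : (1/2 : ℝ) * (∑ i, ∑ j', if j' = j then
        ∑ k, (2:ℝ) * (T i j k - b j * T23 T b c i * c k) * (-(T23 T b c i * c k)) else 0) = 0 := by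
      simp only [Finset.sum_ite_eq', Finset.mem_univ, if_true]
      rw [key2 (fun i k => T i j k) (T23 T b c) c, hc',
        show (∑ i, ∑ k, T i j k * T23 T b c i * c k) = T13 T (T23 T b c) c j from rfl,
        hT13 j, show (∑ i, T23 T b c i ^ 2) = nsq (T23 T b c) from rfl]
      ring
    rw [h0] at h2
    exact h2
  · -- derivative in c
    intro k
    have h1 : HasDerivAt
        (fun t => ∑ i, ∑ j, ∑ k',
          (T i j k' - T23 T b c i * b j * Function.update c k t k') ^ 2)
        (∑ i, ∑ j, ∑ k', if k' = k then
            (2:ℝ) * (T i j k - c k * T23 T b c i * b j) * (-(T23 T b c i * b j)) else 0)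
        (c k) := by
      apply HasDerivAt.fun_sum
      intro i _
      apply HasDerivAt.fun_sum
      intro j _
      apply HasDerivAt.fun_sum
      intro k' _
      by_cases h : k' = k
      · subst h
        simp only [if_pos rfl, if_true, Function.update_self]
        have hd := ((hasDerivAt_const (c k') (T i j k')).fun_sub
          ((hasDerivAt_id (c k')).const_mul (T23 T b c i * b j))).fun_pow 2
        refine hd.congr_deriv ?_
        push_cast
        simp only [id_eq]
        ring
      · simp only [if_neg h, Function.update_of_ne h]
        exact hasDerivAt_const _ _
    have h2 := h1.const_mul (1/2 : ℝ)
    have h0 : (1/2 : ℝ) * (∑ i, ∑ j, ∑ k', if k' = k then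
        (2:ℝ) * (T i j k - c k * T23 T b c i * b j) * (-(T23 T b c i * b j)) else 0) = 0 := by
      simp only [Finset.sum_ite_eq', Finset.mem_univ, if_true]
      rw [key2 (fun i j => T i j k) (T23 T b c) b, hb',
        show (∑ i, ∑ j, T i j k * T23 T b c i * b j) = T12 T (T23 T b c) b k from rfl,
        hT12 k, show (∑ i, T23 T b c i ^ 2) = nsq (T23 T b c) from rfl]
      ring
    rw [h0] at h2
    exact h2
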